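/- The octonionic Cauchy kernel E(x) = x̄/|x|⁸ is both left and right 𝕆-analytic on ℝ⁸ \ {0}, i.e., DE = 0 and ED = 0 there. -/

import Mathlib

/-!
Away from the origin `∂ᵢE(x) = |x|⁻⁸ (ēᵢ - 8 xᵢ x̄ / |x|²)`. Since `eᵢ ēᵢ = ēᵢ eᵢ = 1` and
`∑ xᵢ eᵢ = x`, summing gives `DE(x) = |x|⁻⁸ (8 - 8 x x̄ / |x|²)` and
`ED(x) = |x|⁻⁸ (8 - 8 x̄ x / |x|²)`, both zero because `x x̄ = x̄ x = |x|²`. Only products of two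
octonions occur, so non-associativity never enters.
-/

noncomputable section
open MeasureTheory Metric
open scoped Quaternion

/-- The octonions, via the Cayley–Dickson construction on the quaternions,
carrying the Euclidean (`L²`) norm. -/
abbrev Octonion : Type := WithLp 2 (ℍ[ℝ] × ℍ[ℝ])

namespace Octonion

def mk (a b : ℍ[ℝ]) : Octonion := (WithLp.equiv 2 (ℍ[ℝ] × ℍ[ℝ])).symm (a, b)
def p1 (x : Octonion) : ℍ[ℝ] := (WithLp.equiv 2 (ℍ[ℝ] × ℍ[ℝ]) x).1
def p2 (x : Octonion) : ℍ[ℝ] := (WithLp.equiv 2 (ℍ[ℝ] × ℍ[ℝ]) x).2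

instance : One Octonion := ⟨mk 1 0⟩
/-- Cayley–Dickson multiplication: `(a,b)(c,d) = (ac - d̄b, da + bc̄)`. -/
instance : Mul Octonion :=
  ⟨fun x y => mk (p1 x * p1 y - star (p2 y) * p2 x) (p2 y * p1 x + p2 x * star (p1 y))⟩

/-- Octonionic conjugation. -/
def conj (x : Octonion) : Octonion := mk (star (p1 x)) (-(p2 x))

/-- The standard basis `e₀ = 1, e₁, …, e₇` of the octonions. -/
def e : Fin 8 → Octonion
  | 0 => mk 1 0
  | 1 => mk ⟨0,1,0,0⟩ 0
  | 2 => mk ⟨0,0,1,0⟩ 0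
  | 3 => mk ⟨0,0,0,1⟩ 0
  | 4 => mk 0 1
  | 5 => mk 0 ⟨0,1,0,0⟩
  | 6 => mk 0 ⟨0,0,1,0⟩
  | 7 => mk 0 ⟨0,0,0,1⟩

/-- The real coordinates of an octonion w.r.t. the basis `e`. -/
def coord (i : Fin 8) (x : Octonion) : ℝ :=
  match i with
  | 0 => (p1 x).re | 1 => (p1 x).imI | 2 => (p1 x).imJ | 3 => (p1 x).imK
  | 4 => (p2 x).re | 5 => (p2 x).imI | 6 => (p2 x).imJ | 7 => (p2 x).imK

/-- Partial derivative in the direction `e i`. -/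
def pd (i : Fin 8) (f : Octonion → Octonion) (x : Octonion) : Octonion :=
  fderiv ℝ f x (e i)

/-- The generalized Cauchy–Riemann operator `Df = ∑ eᵢ ∂f/∂xᵢ`. -/
def D (f : Octonion → Octonion) (x : Octonion) : Octonion := ∑ i, e i * pd i f x

/-- The right-acting Cauchy–Riemann operator `fD = ∑ (∂f/∂xᵢ) eᵢ`. -/
def Dright (f : Octonion → Octonion) (x : Octonion) : Octonion := ∑ i, pd i f x * e i

/-- The conjugate Cauchy–Riemann operator `D̄f = ∑ ēᵢ ∂f/∂xᵢ`. -/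
def Dbar (f : Octonion → Octonion) (x : Octonion) : Octonion := ∑ i, conj (e i) * pd i f x

/-- The Laplacian `Δf = ∑ ∂²f/∂xᵢ²`. -/
def lap (f : Octonion → Octonion) (x : Octonion) : Octonion :=
  ∑ i, fderiv ℝ (fun y => fderiv ℝ f y (e i)) x (e i)

instance : MeasurableSpace Octonion := borel _
instance : BorelSpace Octonion := ⟨rfl⟩
instance : MeasureSpace Octonion := ⟨Measure.addHaar⟩

/-- The surface measure on the unit sphere `S⁷`. -/
def sphereMeasure : Measure (sphere (0 : Octonion) 1) := (volume : Measure Octonion).toSphere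

/-- `ω₈`, the surface area of the unit sphere in `ℝ⁸`. -/
def ω : ℝ := (sphereMeasure Set.univ).toReal

end Octonion

theorem hasDerivAt_inv_pow {𝕜 : Type*} [NontriviallyNormedField 𝕜] (n : ℕ) {t : 𝕜} (ht : t ≠ 0) :
    HasDerivAt (fun s => (s ^ n)⁻¹) (-n / t ^ (n + 1)) t := by
  refine ((hasDerivAt_pow n t).fun_inv (pow_ne_zero n ht)).congr_deriv ?_
  cases n with
  | zero => simp
  | succ k => rw [Nat.add_sub_cancel]; field_simp; ring

theorem hasFDerivAt_inv_norm_pow_two_mul {F : Type*} [NormedAddCommGroup F]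
    [InnerProductSpace ℝ F] (n : ℕ) {x : F} (hx : x ≠ 0) :
    HasFDerivAt (fun y : F => (‖y‖ ^ (2 * n))⁻¹)
      ((-(2 * n) / ‖x‖ ^ (2 * n + 2)) • innerSL ℝ x) x := by
  have h := (hasDerivAt_inv_pow n (pow_ne_zero 2 (norm_ne_zero_iff.2 hx))).comp_hasFDerivAt x
    (hasStrictFDerivAt_norm_sq x).hasFDerivAt
  simp only [pow_mul]
  refine h.congr_fderiv ?_
  rw [two_smul, ← two_smul ℝ, smul_smul]
  congr 1
  ring

namespace Octonion

theorem ext {x y : Octonion} (h1 : p1 x = p1 y) (h2 : p2 x = p2 y) : x = y :=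
  (WithLp.equiv 2 _).injective (Prod.ext h1 h2)

@[simp] theorem p1_zero : p1 0 = 0 := rfl
@[simp] theorem p2_zero : p2 0 = 0 := rfl
@[simp] theorem p1_add (x y : Octonion) : p1 (x + y) = p1 x + p1 y := rfl
@[simp] theorem p2_add (x y : Octonion) : p2 (x + y) = p2 x + p2 y := rfl
@[simp] theorem p1_smul (r : ℝ) (x : Octonion) : p1 (r • x) = r • p1 x := rfl
@[simp] theorem p2_smul (r : ℝ) (x : Octonion) : p2 (r • x) = r • p2 x := rfl
@[simp] theorem p1_one : p1 1 = 1 := rfl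
@[simp] theorem p2_one : p2 1 = 0 := rfl
@[simp] theorem p1_mul (x y : Octonion) : p1 (x * y) = p1 x * p1 y - star (p2 y) * p2 x := rfl
@[simp] theorem p2_mul (x y : Octonion) : p2 (x * y) = p2 y * p1 x + p2 x * star (p1 y) := rfl
@[simp] theorem p1_conj (x : Octonion) : p1 (conj x) = star (p1 x) := rfl
@[simp] theorem p2_conj (x : Octonion) : p2 (conj x) = -p2 x := rfl

-- Local only: as a global instance it would reroute the elaboration of `0 : Octonion` through
-- the multiplication.
abbrev nonUnitalNonAssocRing : NonUnitalNonAssocRing Octonion where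
  left_distrib a b c := by apply ext <;> simp [mul_add, add_mul] <;> abel
  right_distrib a b c := by apply ext <;> simp [mul_add, add_mul] <;> abel
  zero_mul a := by apply ext <;> simp
  mul_zero a := by apply ext <;> simp

attribute [local instance] nonUnitalNonAssocRing

instance : IsScalarTower ℝ Octonion Octonion :=
  ⟨fun r a b => by apply ext <;> simp [smul_sub, smul_add]⟩

instance : SMulCommClass ℝ Octonion Octonion :=
  ⟨fun r a b => by apply ext <;> simp [smul_sub, smul_add]⟩

theorem norm_sq_eq (x : Octonion) :
    ‖x‖ ^ 2 = Quaternion.normSq (p1 x) + Quaternion.normSq (p2 x) := by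
  rw [WithLp.prod_norm_sq_eq_of_L2]
  simp [← Quaternion.normSq_eq_norm_mul_self, sq, p1, p2]

theorem mul_conj (x : Octonion) : x * conj x = ‖x‖ ^ 2 • 1 := by
  apply ext
  · simp [norm_sq_eq, Quaternion.self_mul_star, Quaternion.star_mul_self, Algebra.smul_def]
  · simp

theorem conj_mul (x : Octonion) : conj x * x = ‖x‖ ^ 2 • 1 := by
  apply ext
  · simp [norm_sq_eq, Quaternion.star_mul_self, Algebra.smul_def]
  · simp

-- The quaternion literals in `e` have type `ℍ[ℝ,-1,0,-1]`, on which the `ℍ[ℝ]` simp lemmas do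
-- not fire; hence `e` is unfolded only after the `ℍ[ℝ]`-level simplification.
theorem norm_e (i : Fin 8) : ‖e i‖ = 1 := by
  rw [← pow_eq_one_iff_of_nonneg (norm_nonneg _) two_ne_zero, norm_sq_eq]
  fin_cases i <;> simp [Quaternion.normSq_def'] <;> simp [e, mk, p1, p2]

theorem sum_coord_smul_e (x : Octonion) : ∑ i, coord i x • e i = x := by
  apply ext <;> simp [Fin.sum_univ_eight, coord, Quaternion.ext_iff] <;> simp [e, mk, p1, p2]

theorem inner_e (x : Octonion) (i : Fin 8) : inner ℝ x (e i) = coord i x := by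
  fin_cases i <;> simp [WithLp.prod_inner_apply, Quaternion.inner_def, Quaternion.re_mul, coord,
    p1, p2] <;> simp [e, mk]

theorem e_mul_conj_e (i : Fin 8) : e i * conj (e i) = 1 := by
  rw [mul_conj, norm_e, one_pow, one_smul]

theorem conj_e_mul_e (i : Fin 8) : conj (e i) * e i = 1 := by
  rw [conj_mul, norm_e, one_pow, one_smul]

theorem sum_e_mul_conj_e_sub (b : ℝ) (x y : Octonion) :
    ∑ i, e i * (conj (e i) - (b * coord i x) • y) = (8 : ℝ) • 1 - b • (x * y) := by
  simp only [mul_sub, mul_smul_comm, e_mul_conj_e, Finset.sum_sub_distrib, Finset.sum_const,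
    Finset.card_univ, Fintype.card_fin, mul_smul, ← Finset.smul_sum, ← smul_mul_assoc,
    ← Finset.sum_mul, sum_coord_smul_e]
  rw [smul_mul_assoc]
  module

theorem sum_conj_e_sub_mul_e (b : ℝ) (x y : Octonion) :
    ∑ i, (conj (e i) - (b * coord i x) • y) * e i = (8 : ℝ) • 1 - b • (y * x) := by
  simp only [sub_mul, smul_mul_assoc, conj_e_mul_e, Finset.sum_sub_distrib, Finset.sum_const,
    Finset.card_univ, Fintype.card_fin, mul_smul, ← Finset.smul_sum, ← mul_smul_comm,
    ← Finset.mul_sum, sum_coord_smul_e]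
  rw [mul_smul_comm]
  module

def conjL : Octonion →L[ℝ] Octonion :=
  LinearMap.toContinuousLinearMap
    { toFun := conj
      map_add' x y := by apply ext <;> simp [add_comm]
      map_smul' r x := by apply ext <;> simp }

@[simp] theorem conjL_apply (x : Octonion) : conjL x = conj x := rfl

def cauchyKernel (y : Octonion) : Octonion := (‖y‖ ^ 8)⁻¹ • conj y

theorem hasFDerivAt_cauchyKernel {x : Octonion} (hx : x ≠ 0) :
    HasFDerivAt cauchyKernel
      ((‖x‖ ^ 8)⁻¹ • conjL + ((-8 / ‖x‖ ^ 10) • innerSL ℝ x).smulRight (conj x)) x := by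
  have h := (hasFDerivAt_inv_norm_pow_two_mul 4 hx).smul conjL.hasFDerivAt
  norm_num at h
  exact h

theorem pd_cauchyKernel {x : Octonion} (hx : x ≠ 0) (i : Fin 8) :
    pd i cauchyKernel x = (‖x‖ ^ 8)⁻¹ • (conj (e i) - (8 / ‖x‖ ^ 2 * coord i x) • conj x) := by
  rw [pd, (hasFDerivAt_cauchyKernel hx).fderiv]
  simp only [add_apply, smul_apply, conjL_apply, ContinuousLinearMap.smulRight_apply,
    innerSL_apply_apply, inner_e, smul_eq_mul]
  rw [smul_sub, smul_smul, sub_eq_add_neg, ← neg_smul]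
  have := norm_ne_zero_iff.2 hx
  congr 2
  field_simp

theorem D_cauchyKernel {x : Octonion} (hx : x ≠ 0) : D cauchyKernel x = 0 := by
  have hx2 : ‖x‖ ^ 2 ≠ 0 := by positivity
  simp only [D, pd_cauchyKernel hx, mul_smul_comm, ← Finset.smul_sum, sum_e_mul_conj_e_sub,
    mul_conj, smul_smul, div_mul_cancel₀ _ hx2, sub_self, smul_zero]

theorem Dright_cauchyKernel {x : Octonion} (hx : x ≠ 0) : Dright cauchyKernel x = 0 := by
  have hx2 : ‖x‖ ^ 2 ≠ 0 := by positivity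
  simp only [Dright, pd_cauchyKernel hx, smul_mul_assoc, ← Finset.smul_sum, sum_conj_e_sub_mul_e,
    conj_mul, smul_smul, div_mul_cancel₀ _ hx2, sub_self, smul_zero]

end Octonion

/-- The octonionic Cauchy kernel `E(x) = x̄/|x|⁸` is left and right
octonionic analytic away from the origin. -/
theorem octonion_cauchy_kernel_analytic (x : Octonion) (hx : x ≠ 0) :
    Octonion.D (fun y => (‖y‖ ^ 8)⁻¹ • Octonion.conj y) x = 0 ∧
    Octonion.Dright (fun y => (‖y‖ ^ 8)⁻¹ • Octonion.conj y) x = 0 :=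
  ⟨Octonion.D_cauchyKernel hx, Octonion.Dright_cauchyKernel hx⟩
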